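/- Let α ∈ ℂ and set ν = 2α + 1/2. Suppose u is holomorphic and nowhere vanishing on an open set Ω ⊆ ℂ and satisfies the thirty-fourth Painlevé equation u''(s) = 4 u(s)² + 2 s u(s) + (u'(s)² − (2α)²)/(2 u(s)) for all s ∈ Ω. Define Q(s) = (u'(s) − 2α)/(2 u(s)) on Ω, and q(s) = −2^{−1/3} Q(−2^{−1/3} s) for those s ∈ ℂ with −2^{−1/3} s ∈ Ω. Then q satisfies the second Painlevé equation q''(s) = 2 q(s)³ + s q(s) − ν at every such point. -/

import Mathlib

/-!
`Q = (u' - 2α) / (2u)` satisfies the Riccati equation `Q' = 2u + s - Q²`. Differentiating once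
more and eliminating `u' = 2uQ + 2α` gives `Q'' = 2Q³ - 2sQ + 4α + 1`. The rescaling
`q(s) = c Q(cs)` multiplies second derivatives by `c³ = -1/2`, which turns this into
Painlevé II with `ν = 2α + 1/2`.
-/

/-- The real cube root of 2. -/
noncomputable def cbrt2 : ℝ := (2 : ℝ) ^ ((1 : ℝ) / 3)

theorem cbrt2_pow_three : cbrt2 ^ 3 = 2 := by
  rw [cbrt2, ← Real.rpow_natCast, ← Real.rpow_mul zero_le_two]
  norm_num

theorem deriv_deriv_const_mul_comp_mul_left {𝕜 : Type*} [NontriviallyNormedField 𝕜]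
    (c : 𝕜) (f : 𝕜 → 𝕜) (x : 𝕜) :
    deriv (deriv fun s => c * f (c * s)) x = c ^ 3 * deriv (deriv f) (c * x) := by
  have hderiv : ∀ g : 𝕜 → 𝕜,
      (deriv fun s => c * g (c * s)) = fun s => c ^ 2 * deriv g (c * s) := by
    intro g
    funext s
    rw [deriv_const_mul_field, deriv_comp_mul_left, smul_eq_mul]
    ring
  rw [hderiv, deriv_const_mul_field, deriv_comp_mul_left, smul_eq_mul]
  ring

section PainleveXXXIV

variable {α t : ℂ} {u Q : ℂ → ℂ}

theorem deriv_eq_mul_add_of_eq_div (hQ : ∀ s, Q s = (deriv u s - 2 * α) / (2 * u s))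
    (hne : u t ≠ 0) :
    deriv u t = 2 * u t * Q t + 2 * α := by
  rw [hQ]
  field_simp
  ring

theorem hasDerivAt_of_painleveXXXIV (hQ : ∀ s, Q s = (deriv u s - 2 * α) / (2 * u s))
    (hu : DifferentiableAt ℂ u t) (hu' : DifferentiableAt ℂ (deriv u) t) (hne : u t ≠ 0)
    (hode : deriv (deriv u) t =
      4 * u t ^ 2 + 2 * t * u t + ((deriv u t) ^ 2 - (2 * α) ^ 2) / (2 * u t)) :
    HasDerivAt Q (2 * u t + t - Q t ^ 2) t := by
  have hQ' : Q = fun s => (deriv u s - 2 * α) / (2 * u s) := funext hQ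
  subst hQ'
  refine ((hu'.hasDerivAt.sub_const _).div (hu.hasDerivAt.const_mul 2)
    (by simpa using hne)).congr_deriv ?_
  rw [hode]
  field_simp
  ring

theorem hasDerivAt_deriv_of_painleveXXXIV (hQ : ∀ s, Q s = (deriv u s - 2 * α) / (2 * u s))
    {Ω : Set ℂ} (hΩ : IsOpen Ω) (hu : DifferentiableOn ℂ u Ω) (hne : ∀ s ∈ Ω, u s ≠ 0)
    (hode : ∀ s ∈ Ω, deriv (deriv u) s =
      4 * u s ^ 2 + 2 * s * u s + ((deriv u s) ^ 2 - (2 * α) ^ 2) / (2 * u s))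
    (ht : t ∈ Ω) :
    HasDerivAt (deriv Q) (2 * Q t ^ 3 - 2 * t * Q t + (4 * α + 1)) t := by
  have hu_an : AnalyticOnNhd ℂ u Ω := hu.analyticOnNhd hΩ
  have hQ_deriv : ∀ s ∈ Ω, HasDerivAt Q (2 * u s + s - Q s ^ 2) s := fun s hs =>
    hasDerivAt_of_painleveXXXIV hQ (hu_an s hs).differentiableAt
      (hu_an.deriv s hs).differentiableAt (hne s hs) (hode s hs)
  have hriccati : deriv Q =ᶠ[nhds t] fun s => 2 * u s + s - Q s ^ 2 := by
    filter_upwards [hΩ.mem_nhds ht] with s hs using (hQ_deriv s hs).deriv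
  have hderiv_riccati := ((((hu_an t ht).differentiableAt.hasDerivAt.const_mul 2).add (hasDerivAt_id t)).sub
    ((hQ_deriv t ht).pow 2)).congr_of_eventuallyEq hriccati
  refine hderiv_riccati.congr_deriv ?_
  rw [deriv_eq_mul_add_of_eq_div hQ (hne t ht)]
  push_cast
  ring

end PainleveXXXIV

/-- If `u` is holomorphic and nowhere vanishing on an open set `Ω ⊆ ℂ` and solves
Painlevé XXXIV `u'' = 4u² + 2su + ((u')² − (2α)²)/(2u)`, then
`q(s) = −2^{-1/3} Q(−2^{-1/3} s)` with `Q = (u' − 2α)/(2u)` solves Painlevé II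
`q'' = 2q³ + sq − ν` with `ν = 2α + 1/2`, at every point where it is defined. -/
theorem stmt1 (α ν : ℂ) (hν : ν = 2 * α + 1 / 2)
    (Ω : Set ℂ) (hΩ : IsOpen Ω) (u : ℂ → ℂ)
    (hu : DifferentiableOn ℂ u Ω) (hne : ∀ s ∈ Ω, u s ≠ 0)
    (hode : ∀ s ∈ Ω, deriv (deriv u) s =
      4 * u s ^ 2 + 2 * s * u s + ((deriv u s) ^ 2 - (2 * α) ^ 2) / (2 * u s))
    (Q q : ℂ → ℂ)
    (hQ : ∀ s : ℂ, Q s = (deriv u s - 2 * α) / (2 * u s))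
    (hq : ∀ s : ℂ, q s = -((cbrt2 : ℝ) : ℂ)⁻¹ * Q (-((cbrt2 : ℝ) : ℂ)⁻¹ * s)) :
    ∀ s : ℂ, -((cbrt2 : ℝ) : ℂ)⁻¹ * s ∈ Ω →
      deriv (deriv q) s = 2 * q s ^ 3 + s * q s - ν := by
  intro s hs
  set c : ℂ := -((cbrt2 : ℝ) : ℂ)⁻¹
  have hc : c ^ 3 = -1 / 2 := by
    have hcbrt : ((cbrt2 : ℝ) : ℂ) ^ 3 = 2 := by exact_mod_cast cbrt2_pow_three
    rw [neg_pow, inv_pow, hcbrt]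
    norm_num
  have hq' : q = fun s => c * Q (c * s) := funext hq
  rw [hq', deriv_deriv_const_mul_comp_mul_left,
    (hasDerivAt_deriv_of_painleveXXXIV hQ hΩ hu hne hode hs).deriv]
  linear_combination (-2 * s * Q (c * s) * c + 4 * α + 1) * hc + hν
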